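/- The function 𝒥(x) := −(4/π)·∫₀^{π/2} tanh(x·cos s)·(cos(2s)/cos s) ds is strictly increasing on [0,∞), with 𝒥(0) = 0 and 𝒥(x) → +∞ as x → ∞; its derivative equals (4/π)·∫₀^{π/4} [1/cosh²(x·sin s) − 1/cosh²(x·cos s)]·cos(2s) ds ≥ 0. -/

import Mathlib

open Real Filter Topology intervalIntegral MeasureTheory Metric

lemma hasDerivAt_tanh (x : ℝ) : HasDerivAt Real.tanh (1 / Real.cosh x ^ 2) x := by
  have h := ((Real.hasDerivAt_sinh x).div (Real.hasDerivAt_cosh x) (Real.cosh_pos x).ne')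
  have e : (Real.cosh x * Real.cosh x - Real.sinh x * Real.sinh x) / Real.cosh x ^ 2
      = 1 / Real.cosh x ^ 2 := by
    rw [show Real.cosh x * Real.cosh x - Real.sinh x * Real.sinh x
        = Real.cosh x ^ 2 - Real.sinh x ^ 2 by ring, Real.cosh_sq_sub_sinh_sq]
  have : Real.tanh = fun y => Real.sinh y / Real.cosh y := by
    funext y; exact Real.tanh_eq_sinh_div_cosh y
  rw [this, ← e]; exact h

lemma tanh_strictMono : StrictMono Real.tanh :=
  strictMono_of_deriv_pos (fun x => by
    rw [(hasDerivAt_tanh x).deriv]; positivity)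

lemma tanh_le_self {x : ℝ} (hx : 0 ≤ x) : Real.tanh x ≤ x := by
  have key : ∀ y ∈ Set.Ici (0:ℝ), Real.sinh y ≤ y * Real.cosh y := by
    intro y hy
    have mono : MonotoneOn (fun y => y * Real.cosh y - Real.sinh y) (Set.Ici (0:ℝ)) := by
      apply monotoneOn_of_deriv_nonneg (convex_Ici 0)
      · fun_prop
      · fun_prop
      · intro z hz
        rw [interior_Ici] at hz
        have : HasDerivAt (fun y => y * Real.cosh y - Real.sinh y) (z * Real.sinh z) z := by
          have := ((hasDerivAt_id' z).mul (Real.hasDerivAt_cosh z)).sub (Real.hasDerivAt_sinh z)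
          exact this.congr_deriv (by ring)
        rw [this.deriv]
        exact mul_nonneg hz.le (Real.sinh_nonneg_iff.2 hz.le)
    have := mono (Set.self_mem_Ici) hy hy
    simpa using this
  have h := key x hx
  rw [Real.tanh_eq_sinh_div_cosh, div_le_iff₀ (Real.cosh_pos x)]
  exact h

lemma abs_tanh_le_one (x : ℝ) : |Real.tanh x| ≤ 1 := by
  rw [Real.tanh_eq_sinh_div_cosh, abs_div, abs_of_pos (Real.cosh_pos x),
    div_le_one (Real.cosh_pos x), abs_le]
  constructor
  · nlinarith [Real.cosh_add_sinh x, Real.exp_pos x]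
  · nlinarith [Real.cosh_sub_sinh x, Real.exp_pos (-x)]


lemma continuous_tanh : Continuous Real.tanh := by
  have : Real.tanh = fun y => Real.sinh y / Real.cosh y := by
    funext y; exact Real.tanh_eq_sinh_div_cosh y
  rw [this]
  exact Real.continuous_sinh.div Real.continuous_cosh fun y => (Real.cosh_pos y).ne'

lemma abs_tanh_le_abs (x : ℝ) : |Real.tanh x| ≤ |x| := by
  have key : ∀ y : ℝ, 0 ≤ y → |Real.tanh y| ≤ |y| := by
    intro y hy
    rw [abs_of_nonneg hy, abs_of_nonneg]
    · exact tanh_le_self hy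
    · rw [Real.tanh_eq_sinh_div_cosh]
      exact div_nonneg (Real.sinh_nonneg_iff.2 hy) (Real.cosh_pos y).le
  rcases le_or_gt 0 x with h | h
  · exact key x h
  · have := key (-x) (by linarith)
    rwa [Real.tanh_neg, abs_neg, abs_neg] at this

lemma integrand_bound (x s : ℝ) (hs : s ∈ Set.Ioc (0:ℝ) (π/2)) :
    ‖Real.tanh (x * Real.cos s) * (Real.cos (2*s) / Real.cos s)‖ ≤ |x| := by
  have hc : 0 ≤ Real.cos s :=
    Real.cos_nonneg_of_mem_Icc ⟨by linarith [hs.1, Real.pi_pos], hs.2⟩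
  rcases eq_or_lt_of_le hc with h0 | h0
  · simp [← h0, Real.tanh_zero]
  · rw [norm_mul, Real.norm_eq_abs, Real.norm_eq_abs, abs_div, abs_of_pos h0]
    have h1 : |Real.tanh (x * Real.cos s)| ≤ |x| * Real.cos s := by
      calc |Real.tanh (x * Real.cos s)| ≤ |x * Real.cos s| := abs_tanh_le_abs _
        _ = |x| * Real.cos s := by rw [abs_mul, abs_of_pos h0]
    have h2 : |Real.cos (2*s)| / Real.cos s ≤ 1 / Real.cos s :=
      div_le_div_of_nonneg_right (Real.abs_cos_le_one _) hc
    calc |Real.tanh (x * Real.cos s)| * (|Real.cos (2*s)| / Real.cos s)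
        ≤ (|x| * Real.cos s) * (1 / Real.cos s) :=
          mul_le_mul h1 h2 (by positivity) (by positivity)
      _ = |x| := by field_simp

lemma measurableJint (x : ℝ) : Measurable
    (fun s => Real.tanh (x * Real.cos s) * (Real.cos (2*s) / Real.cos s)) := by
  exact ((continuous_tanh.comp (continuous_const.mul Real.continuous_cos)).measurable).mul
    (((Real.continuous_cos.comp (continuous_const.mul continuous_id)).measurable).div
      Real.continuous_cos.measurable)

lemma integrableJ (x : ℝ) : IntervalIntegrable
    (fun s => Real.tanh (x * Real.cos s) * (Real.cos (2*s) / Real.cos s)) volume 0 (π/2) := by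
  rw [intervalIntegrable_iff]
  constructor
  · exact (measurableJint x).aestronglyMeasurable
  · rw [Set.uIoc_of_le (by positivity : (0:ℝ) ≤ π/2)]
    haveI : IsFiniteMeasure (volume.restrict (Set.Ioc (0:ℝ) (π/2))) :=
      ⟨by rw [Measure.restrict_apply_univ]; exact measure_Ioc_lt_top⟩
    apply MeasureTheory.HasFiniteIntegral.of_bounded (C := |x|)
    filter_upwards [ae_restrict_mem measurableSet_Ioc] with s hs
    exact integrand_bound x s hs


lemma hasDerivAt_inner (x₀ : ℝ) :
    HasDerivAt (fun x => ∫ s in (0:ℝ)..(π/2),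
        Real.tanh (x * Real.cos s) * (Real.cos (2*s) / Real.cos s))
      (∫ s in (0:ℝ)..(π/2), 1 / Real.cosh (x₀ * Real.cos s) ^ 2 * Real.cos (2*s)) x₀ := by
  have hne : ∀ᵐ t : ℝ ∂volume, t ≠ π/2 := by
    rw [ae_iff]
    have : {t : ℝ | ¬ t ≠ π/2} = {π/2} := by ext t; simp
    rw [this]
    exact measure_singleton _
  have key := intervalIntegral.hasDerivAt_integral_of_dominated_loc_of_deriv_le
    (F := fun x s => Real.tanh (x * Real.cos s) * (Real.cos (2*s) / Real.cos s))
    (F' := fun x s => 1 / Real.cosh (x * Real.cos s) ^ 2 * Real.cos (2*s))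
    (x₀ := x₀) (a := 0) (b := π/2) (bound := fun _ => 1) (μ := volume)
    (s := ball x₀ 1) (ball_mem_nhds x₀ one_pos)
    (Filter.Eventually.of_forall fun x => (measurableJint x).aestronglyMeasurable)
    (integrableJ x₀)
    ?_ ?_ ?_ ?_
  · exact key.2
  · apply Continuous.aestronglyMeasurable
    apply Continuous.mul ?_ (Real.continuous_cos.comp (continuous_const.mul continuous_id))
    apply Continuous.div continuous_const
    · exact (Real.continuous_cosh.comp (continuous_const.mul Real.continuous_cos)).pow 2
    · intro s; positivity
  · filter_upwards with t _ x _
    rw [norm_mul, Real.norm_eq_abs, Real.norm_eq_abs]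
    have h1 : |1 / Real.cosh (x * Real.cos t) ^ 2| ≤ 1 := by
      rw [abs_of_pos (by positivity)]
      rw [div_le_one (by positivity)]
      have := Real.one_le_cosh (x * Real.cos t)
      nlinarith
    calc |1 / Real.cosh (x * Real.cos t) ^ 2| * |Real.cos (2*t)| ≤ 1 * 1 :=
        mul_le_mul h1 (Real.abs_cos_le_one _) (abs_nonneg _) zero_le_one
      _ = 1 := by ring
  · exact intervalIntegrable_const
  · filter_upwards [hne] with t ht htmem x _
    have hc : Real.cos t ≠ 0 := by
      rw [Set.uIoc_of_le (by positivity : (0:ℝ) ≤ π/2)] at htmem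
      have : 0 < Real.cos t := Real.cos_pos_of_mem_Ioo
        ⟨by linarith [htmem.1, Real.pi_pos], lt_of_le_of_ne htmem.2 ht⟩
      exact this.ne'
    have h1 : HasDerivAt (fun x : ℝ => Real.tanh (x * Real.cos t))
        (1 / Real.cosh (x * Real.cos t) ^ 2 * Real.cos t) x := by
      have := (hasDerivAt_tanh (x * Real.cos t)).comp x (hasDerivAt_mul_const (Real.cos t))
      exact this
    have h2 := h1.mul_const (Real.cos (2*t) / Real.cos t)
    refine h2.congr_deriv ?_
    rw [mul_assoc, mul_div_assoc', mul_div_cancel_left₀ _ hc]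


noncomputable def Jfun (x : ℝ) : ℝ :=
  -(4 / π) * ∫ s in (0 : ℝ)..(π / 2),
      Real.tanh (x * Real.cos s) * (Real.cos (2 * s) / Real.cos s)

lemma cont_sech2 (x : ℝ) (g : ℝ → ℝ) (hg : Continuous g) :
    Continuous (fun s => 1 / Real.cosh (x * g s) ^ 2 * Real.cos (2*s)) := by
  apply Continuous.mul ?_ (Real.continuous_cos.comp (continuous_const.mul continuous_id))
  apply Continuous.div continuous_const
  · exact (Real.continuous_cosh.comp (continuous_const.mul hg)).pow 2
  · intro s; positivity

lemma reflect_integral (x : ℝ) :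
    ∫ s in (0:ℝ)..(π/2), 1 / Real.cosh (x * Real.cos s) ^ 2 * Real.cos (2*s)
      = - ∫ s in (0:ℝ)..(π/4),
          (1 / Real.cosh (x * Real.sin s) ^ 2 - 1 / Real.cosh (x * Real.cos s) ^ 2) *
            Real.cos (2 * s) := by
  have hcont := cont_sech2 x Real.cos Real.continuous_cos
  have hsplit : (∫ s in (0:ℝ)..(π/4), 1 / Real.cosh (x * Real.cos s) ^ 2 * Real.cos (2*s))
      + (∫ s in (π/4:ℝ)..(π/2), 1 / Real.cosh (x * Real.cos s) ^ 2 * Real.cos (2*s))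
      = ∫ s in (0:ℝ)..(π/2), 1 / Real.cosh (x * Real.cos s) ^ 2 * Real.cos (2*s) :=
    intervalIntegral.integral_add_adjacent_intervals
      (hcont.intervalIntegrable _ _) (hcont.intervalIntegrable _ _)
  have hrefl : ∫ s in (π/4:ℝ)..(π/2), 1 / Real.cosh (x * Real.cos s) ^ 2 * Real.cos (2*s)
      = ∫ s in (0:ℝ)..(π/4), - (1 / Real.cosh (x * Real.sin s) ^ 2 * Real.cos (2*s)) := by
    have h := intervalIntegral.integral_comp_sub_left (a := 0) (b := π/4)
      (fun s => 1 / Real.cosh (x * Real.cos s) ^ 2 * Real.cos (2*s)) (π/2)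
    have e1 : π/2 - π/4 = π/4 := by ring
    have e2 : π/2 - 0 = π/2 := by ring
    rw [e1, e2] at h
    rw [← h]
    apply intervalIntegral.integral_congr
    intro s _
    have c1 : Real.cos (π/2 - s) = Real.sin s := Real.cos_pi_div_two_sub s
    have c2 : Real.cos (2*(π/2 - s)) = - Real.cos (2*s) := by
      rw [show 2*(π/2 - s) = π - 2*s by ring, Real.cos_pi_sub]
    simp only [c1, c2]; ring
  have e : ∫ s in (0:ℝ)..(π/4),
      (1 / Real.cosh (x * Real.sin s) ^ 2 - 1 / Real.cosh (x * Real.cos s) ^ 2) * Real.cos (2*s)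
      = (∫ s in (0:ℝ)..(π/4), 1 / Real.cosh (x * Real.sin s) ^ 2 * Real.cos (2*s))
      - (∫ s in (0:ℝ)..(π/4), 1 / Real.cosh (x * Real.cos s) ^ 2 * Real.cos (2*s)) := by
    rw [← intervalIntegral.integral_sub
      ((cont_sech2 x Real.sin Real.continuous_sin).intervalIntegrable _ _)
      ((cont_sech2 x Real.cos Real.continuous_cos).intervalIntegrable _ _)]
    apply intervalIntegral.integral_congr
    intro s _
    ring
  rw [← hsplit, hrefl, intervalIntegral.integral_neg, e]
  ring

lemma hasDerivAt_Jfun (x : ℝ) :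
    HasDerivAt Jfun ((4 / π) * ∫ s in (0:ℝ)..(π/4),
        (1 / Real.cosh (x * Real.sin s) ^ 2 - 1 / Real.cosh (x * Real.cos s) ^ 2) *
          Real.cos (2 * s)) x := by
  have h := (hasDerivAt_inner x).const_mul (-(4/π))
  have : Jfun = fun y => -(4/π) * ∫ s in (0:ℝ)..(π/2),
      Real.tanh (y * Real.cos s) * (Real.cos (2*s) / Real.cos s) := rfl
  rw [this]
  refine h.congr_deriv ?_
  rw [reflect_integral]
  ring


lemma cont_integrand (x : ℝ) : Continuous (fun s =>
    (1 / Real.cosh (x * Real.sin s) ^ 2 - 1 / Real.cosh (x * Real.cos s) ^ 2) *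
      Real.cos (2 * s)) := by
  have h1 := cont_sech2 x Real.sin Real.continuous_sin
  have h2 := cont_sech2 x Real.cos Real.continuous_cos
  have : (fun s => (1 / Real.cosh (x * Real.sin s) ^ 2 - 1 / Real.cosh (x * Real.cos s) ^ 2) *
      Real.cos (2 * s)) = fun s => (1 / Real.cosh (x * Real.sin s) ^ 2 * Real.cos (2*s))
        - (1 / Real.cosh (x * Real.cos s) ^ 2 * Real.cos (2*s)) := by
    funext s; ring
  rw [this]; exact h1.sub h2

lemma deriv_integral_nonneg {x : ℝ} (hx : 0 ≤ x) :
    0 ≤ ∫ s in (0:ℝ)..(π/4),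
        (1 / Real.cosh (x * Real.sin s) ^ 2 - 1 / Real.cosh (x * Real.cos s) ^ 2) *
          Real.cos (2 * s) := by
  apply intervalIntegral.integral_nonneg (by positivity)
  intro s hs
  obtain ⟨h0, h1⟩ := hs
  have hpi := Real.pi_pos
  have hsc : Real.sin s ≤ Real.cos s := by
    rw [← Real.cos_pi_div_two_sub s]
    apply Real.cos_le_cos_of_nonneg_of_le_pi (by linarith) (by linarith) (by linarith)
  have hs0 : 0 ≤ Real.sin s := Real.sin_nonneg_of_nonneg_of_le_pi h0 (by linarith)
  have hcosh : Real.cosh (x * Real.sin s) ≤ Real.cosh (x * Real.cos s) := by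
    rw [Real.cosh_le_cosh]
    rw [abs_of_nonneg (mul_nonneg hx hs0), abs_of_nonneg (mul_nonneg hx (by linarith))]
    exact mul_le_mul_of_nonneg_left hsc hx
  apply mul_nonneg
  · rw [sub_nonneg]
    apply one_div_le_one_div_of_le (by positivity)
    exact pow_le_pow_left₀ (Real.cosh_pos _).le hcosh 2
  · apply Real.cos_nonneg_of_mem_Icc
    constructor <;> [linarith; linarith]

lemma deriv_integral_pos {x : ℝ} (hx : 0 < x) :
    0 < ∫ s in (0:ℝ)..(π/4),
        (1 / Real.cosh (x * Real.sin s) ^ 2 - 1 / Real.cosh (x * Real.cos s) ^ 2) *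
          Real.cos (2 * s) := by
  have hpi := Real.pi_pos
  apply intervalIntegral.intervalIntegral_pos_of_pos_on
    ((cont_integrand x).intervalIntegrable _ _)
  · intro s hs
    obtain ⟨h0, h1⟩ := hs
    have hsc : Real.sin s < Real.cos s := by
      rw [← Real.cos_pi_div_two_sub s]
      apply Real.cos_lt_cos_of_nonneg_of_le_pi (by linarith) (by linarith) (by linarith)
    have hs0 : 0 < Real.sin s := Real.sin_pos_of_pos_of_lt_pi h0 (by linarith)
    have hcosh : Real.cosh (x * Real.sin s) < Real.cosh (x * Real.cos s) := by
      rw [Real.cosh_lt_cosh]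
      rw [abs_of_nonneg (mul_nonneg hx.le hs0.le), abs_of_nonneg (mul_nonneg hx.le (by linarith))]
      exact mul_lt_mul_of_pos_left hsc hx
    apply mul_pos
    · rw [sub_pos]
      apply one_div_lt_one_div_of_lt (by positivity)
      have := (Real.cosh_pos (x * Real.sin s))
      nlinarith
    · apply Real.cos_pos_of_mem_Ioo
      constructor <;> [linarith; linarith]
  · linarith




lemma tanh_nonneg {x : ℝ} (hx : 0 ≤ x) : 0 ≤ Real.tanh x := by
  rw [Real.tanh_eq_sinh_div_cosh]
  exact div_nonneg (Real.sinh_nonneg_iff.2 hx) (Real.cosh_pos x).le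

lemma pointwise_id (x s : ℝ) :
    Real.tanh (x * Real.cos s) / Real.cos s
      = 2 * (Real.tanh (x * Real.cos s) * Real.cos s)
        - Real.tanh (x * Real.cos s) * (Real.cos (2*s) / Real.cos s) := by
  by_cases hc : Real.cos s = 0
  · simp [hc]
  · rw [Real.cos_two_mul]
    field_simp
    ring

lemma contA (x : ℝ) : Continuous (fun s => Real.tanh (x * Real.cos s) * Real.cos s) :=
  (continuous_tanh.comp (continuous_const.mul Real.continuous_cos)).mul Real.continuous_cos

lemma Bint_integrable (x : ℝ) : IntervalIntegrable
    (fun s => Real.tanh (x * Real.cos s) / Real.cos s) volume 0 (π/2) := by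
  have : (fun s => Real.tanh (x * Real.cos s) / Real.cos s)
      = fun s => 2 * (Real.tanh (x * Real.cos s) * Real.cos s)
        - Real.tanh (x * Real.cos s) * (Real.cos (2*s) / Real.cos s) :=
    funext fun s => pointwise_id x s
  rw [this]
  exact ((continuous_const.mul (contA x)).intervalIntegrable _ _).sub (integrableJ x)

lemma Jfun_eq (x : ℝ) : Jfun x = (4/π) *
    ((∫ s in (0:ℝ)..(π/2), Real.tanh (x * Real.cos s) / Real.cos s)
      - 2 * ∫ s in (0:ℝ)..(π/2), Real.tanh (x * Real.cos s) * Real.cos s) := by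
  have h : ∫ s in (0:ℝ)..(π/2), Real.tanh (x * Real.cos s) / Real.cos s
      = (∫ s in (0:ℝ)..(π/2), 2 * (Real.tanh (x * Real.cos s) * Real.cos s))
        - ∫ s in (0:ℝ)..(π/2), Real.tanh (x * Real.cos s) * (Real.cos (2*s) / Real.cos s) := by
    rw [← intervalIntegral.integral_sub (f := fun s => 2 * (Real.tanh (x * Real.cos s) * Real.cos s))
      ((continuous_const.mul (contA x)).intervalIntegrable _ _) (integrableJ x)]
    apply intervalIntegral.integral_congr
    intro s _
    exact pointwise_id x s
  rw [intervalIntegral.integral_const_mul] at h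
  unfold Jfun
  have : ∫ s in (0:ℝ)..(π/2), Real.tanh (x * Real.cos s) * (Real.cos (2*s) / Real.cos s)
      = 2 * (∫ s in (0:ℝ)..(π/2), Real.tanh (x * Real.cos s) * Real.cos s)
        - ∫ s in (0:ℝ)..(π/2), Real.tanh (x * Real.cos s) / Real.cos s := by linarith
  rw [this]
  ring

lemma A_le_one (x : ℝ) :
    (∫ s in (0:ℝ)..(π/2), Real.tanh (x * Real.cos s) * Real.cos s) ≤ 1 := by
  have hpi := Real.pi_pos
  have h1 : ∫ s in (0:ℝ)..(π/2), Real.cos s = 1 := by simp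
  rw [← h1]
  apply intervalIntegral.integral_mono_on (by positivity)
    ((contA x).intervalIntegrable _ _) (Real.continuous_cos.intervalIntegrable _ _)
  intro s hs
  have hc : 0 ≤ Real.cos s := Real.cos_nonneg_of_mem_Icc ⟨by linarith [hs.1], hs.2⟩
  nlinarith [abs_tanh_le_one (x * Real.cos s), abs_le.1 (abs_tanh_le_one (x * Real.cos s))]

lemma B_lower {x : ℝ} (hx : 1 ≤ x) :
    Real.tanh (2/π) * Real.log x
      ≤ ∫ s in (0:ℝ)..(π/2), Real.tanh (x * Real.cos s) / Real.cos s := by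
  have hpi := Real.pi_pos
  have hpi3 := Real.pi_gt_three
  have hx0 : 0 < x := by linarith
  set c := Real.tanh (2/π) with hcdef
  have hc : 0 < c := by
    have := tanh_strictMono (show (0:ℝ) < 2/π by positivity)
    rwa [Real.tanh_zero] at this
  have hinvx : 0 < 1/x := by positivity
  have hinvx1 : 1/x ≤ 1 := by rw [div_le_one hx0]; exact hx
  set b := π/2 - 1/x with hbdef
  have hb0 : 0 ≤ b := by rw [hbdef]; linarith
  have hbpi : b < π/2 := by rw [hbdef]; linarith
  -- pointwise facts on [0, b]
  have hkey : ∀ s ∈ Set.Icc (0:ℝ) b,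
      c * (π/2 - s)⁻¹ ≤ Real.tanh (x * Real.cos s) / Real.cos s := by
    intro s hs
    have hs2 : π/2 - s ∈ Set.Icc (1/x) (π/2) := ⟨by simp [hbdef] at hs ⊢; linarith [hs.2],
      by linarith [hs.1]⟩
    have hsinlb : Real.sin (1/x) ≤ Real.sin (π/2 - s) := by
      apply Real.strictMonoOn_sin.monotoneOn ⟨by linarith, by linarith [hs2.1, hs2.2]⟩
        ⟨by linarith [hs2.1], hs2.2⟩ hs2.1
    have hsin1x : 2/π * (1/x) ≤ Real.sin (1/x) :=
      Real.mul_le_sin hinvx.le (by linarith)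
    have hcos_eq : Real.cos s = Real.sin (π/2 - s) := (Real.sin_pi_div_two_sub s).symm
    have hcos_lb : 2/π * (1/x) ≤ Real.cos s := by rw [hcos_eq]; linarith
    have hcos_pos : 0 < Real.cos s := lt_of_lt_of_le (by positivity) hcos_lb
    have hxc : 2/π ≤ x * Real.cos s := by
      have := mul_le_mul_of_nonneg_left hcos_lb hx0.le
      calc (2:ℝ)/π = x * (2/π * (1/x)) := by field_simp
        _ ≤ x * Real.cos s := this
    have htanh_lb : c ≤ Real.tanh (x * Real.cos s) :=
      (tanh_strictMono.monotone hxc)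
    have hcos_ub : Real.cos s ≤ π/2 - s := by
      rw [hcos_eq]; exact Real.sin_le (by linarith [hs2.1])
    rw [← one_div, mul_one_div]
    exact div_le_div₀ (le_trans hc.le htanh_lb) htanh_lb hcos_pos hcos_ub
  have hsub : Set.uIcc (0:ℝ) b ⊆ Set.uIcc (0:ℝ) (π/2) := by
    rw [Set.uIcc_of_le hb0, Set.uIcc_of_le (by linarith)]
    exact Set.Icc_subset_Icc le_rfl hbpi.le
  have hI1int := (Bint_integrable x).mono_set hsub
  have hsub2 : Set.uIcc b (π/2) ⊆ Set.uIcc (0:ℝ) (π/2) := by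
    rw [Set.uIcc_of_le hbpi.le, Set.uIcc_of_le (by linarith)]
    exact Set.Icc_subset_Icc hb0 le_rfl
  have hI2int := (Bint_integrable x).mono_set hsub2
  have hsplit : (∫ s in (0:ℝ)..b, Real.tanh (x * Real.cos s) / Real.cos s)
      + (∫ s in b..(π/2), Real.tanh (x * Real.cos s) / Real.cos s)
      = ∫ s in (0:ℝ)..(π/2), Real.tanh (x * Real.cos s) / Real.cos s :=
    intervalIntegral.integral_add_adjacent_intervals hI1int hI2int
  have hI2nonneg : 0 ≤ ∫ s in b..(π/2), Real.tanh (x * Real.cos s) / Real.cos s := by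
    apply intervalIntegral.integral_nonneg hbpi.le
    intro s hs
    have hcs : 0 ≤ Real.cos s :=
      Real.cos_nonneg_of_mem_Icc ⟨by linarith [hs.1], hs.2⟩
    exact div_nonneg (tanh_nonneg (mul_nonneg hx0.le hcs)) hcs
  have hglb : ContinuousOn (fun s => c * (π/2 - s)⁻¹) (Set.uIcc 0 b) := by
    rw [Set.uIcc_of_le hb0]
    apply continuousOn_const.mul
    apply ContinuousOn.inv₀ (continuous_const.sub continuous_id).continuousOn
    intro s hs
    have : s < π/2 := lt_of_le_of_lt hs.2 hbpi
    exact ne_of_gt (show (0:ℝ) < π/2 - s by linarith)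
  have hI1 : (∫ s in (0:ℝ)..b, c * (π/2 - s)⁻¹)
      ≤ ∫ s in (0:ℝ)..b, Real.tanh (x * Real.cos s) / Real.cos s :=
    intervalIntegral.integral_mono_on hb0 (hglb.intervalIntegrable) hI1int hkey
  have hval : ∫ s in (0:ℝ)..b, (π/2 - s)⁻¹ = Real.log (π/2 * x) := by
    have h := intervalIntegral.integral_comp_sub_left (a := 0) (b := b)
      (fun t => t⁻¹) (π/2)
    rw [h, show π/2 - b = 1/x by rw [hbdef]; ring, show π/2 - 0 = π/2 by ring]
    rw [integral_inv]
    · congr 1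
      field_simp
    · rw [Set.uIcc_of_le (by linarith)]
      intro h0
      exact absurd h0.1 (by simp; positivity)
  have hIval : ∫ s in (0:ℝ)..b, c * (π/2 - s)⁻¹ = c * Real.log (π/2 * x) := by
    rw [intervalIntegral.integral_const_mul, hval]
  have hlog : Real.log x ≤ Real.log (π/2 * x) := by
    apply Real.log_le_log hx0
    nlinarith
  nlinarith [mul_le_mul_of_nonneg_left hlog hc.le]


theorem Jfun_properties :
    StrictMonoOn Jfun (Set.Ici (0 : ℝ)) ∧ Jfun 0 = 0 ∧
    Tendsto Jfun atTop atTop ∧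
    ∀ x : ℝ, 0 ≤ x →
      deriv Jfun x = (4 / π) * ∫ s in (0 : ℝ)..(π / 4),
          (1 / Real.cosh (x * Real.sin s) ^ 2 - 1 / Real.cosh (x * Real.cos s) ^ 2) *
            Real.cos (2 * s) ∧
      (0 : ℝ) ≤ deriv Jfun x := by
  have hpi := Real.pi_pos
  refine ⟨?_, ?_, ?_, ?_⟩
  · -- strict monotonicity
    apply strictMonoOn_of_deriv_pos (convex_Ici 0)
    · exact (continuous_iff_continuousAt.2 fun x =>
        (hasDerivAt_Jfun x).differentiableAt.continuousAt).continuousOn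
    · intro x hx
      rw [interior_Ici] at hx
      rw [(hasDerivAt_Jfun x).deriv]
      exact mul_pos (by positivity) (deriv_integral_pos hx)
  · simp [Jfun]
  · -- tendsto atTop
    have hc : 0 < Real.tanh (2/π) := by
      have := tanh_strictMono (show (0:ℝ) < 2/π by positivity)
      rwa [Real.tanh_zero] at this
    have hlb : ∀ x : ℝ, 1 ≤ x →
        (4/π) * (Real.tanh (2/π) * Real.log x - 2) ≤ Jfun x := by
      intro x hx
      rw [Jfun_eq]
      apply mul_le_mul_of_nonneg_left _ (by positivity)
      have h1 := B_lower hx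
      have h2 := A_le_one x
      linarith
    have htendsto : Tendsto (fun x => (4/π) * (Real.tanh (2/π) * Real.log x - 2))
        atTop atTop := by
      apply Tendsto.const_mul_atTop (by positivity)
      have h := tendsto_atTop_add_const_right atTop (-2 : ℝ)
        (Tendsto.const_mul_atTop hc Real.tendsto_log_atTop)
      simpa [sub_eq_add_neg] using h
    exact tendsto_atTop_mono' atTop
      ((eventually_ge_atTop (1:ℝ)).mono fun x hx => hlb x hx) htendsto
  · intro x hx
    refine ⟨(hasDerivAt_Jfun x).deriv, ?_⟩
    rw [(hasDerivAt_Jfun x).deriv]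
    exact mul_nonneg (by positivity) (deriv_integral_nonneg hx)
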